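/- Let B⁽⁰⁾, B⁽¹⁾, …, B⁽ᵏ⁾ be operator-collections and let 0 ≤ μ' < μ. Then the iterated commutator operator-collection satisfies ||ad_{B⁽ᵏ⁾} ⋯ ad_{B⁽¹⁾}(B⁽⁰⁾)||_{μ'} ≤ (k+1)!·(2e)^k / (μ−μ')^{k+1} · ∏_{t=0}^k ||B⁽ᵗ⁾||_μ. -/

import Mathlib

open scoped BigOperators
set_option linter.unusedSectionVars false
open Matrix

noncomputable section

namespace QLDPC

open scoped Classical

/-- The four Pauli matrices 1, X, Y, Z. -/
def pauliMat : Fin 4 → Matrix (Fin 2) (Fin 2) ℂ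
  | 0 => 1
  | 1 => !![0, 1; 1, 0]
  | 2 => !![0, -Complex.I; Complex.I, 0]
  | 3 => !![1, 0; 0, -1]

variable {Λ E : Type}

/-- Operators on the Hilbert space (ℂ²)^{⊗Λ}. -/
abbrev Op (Λ : Type) [Fintype Λ] [DecidableEq Λ] := Matrix (Λ → Fin 2) (Λ → Fin 2) ℂ

/-- The operator of a Pauli string `p : Λ → Fin 4`. -/
def pauliOp [Fintype Λ] [DecidableEq Λ] (p : Λ → Fin 4) : Op Λ :=
  fun f g => ∏ x, pauliMat (p x) (f x) (g x)

/-- Qubit support of a Pauli string. -/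
def psupp [Fintype Λ] (p : Λ → Fin 4) : Finset Λ :=
  Finset.univ.filter fun x => p x ≠ 0

/-- The operator norm (largest singular value). -/
def opNorm [Fintype Λ] [DecidableEq Λ] (A : Op Λ) : ℝ :=
  ‖Matrix.toEuclideanCLM (𝕜 := ℂ) A‖

/-- Coefficient of the Pauli string `p` in the Pauli-basis expansion of `A`. -/
def pauliCoeff [Fintype Λ] [DecidableEq Λ] (A : Op Λ) (p : Λ → Fin 4) : ℂ :=
  Matrix.trace (pauliOp p * A) / ((2 : ℂ) ^ Fintype.card Λ)

/-- Qubit support of a general operator, via its Pauli expansion. -/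
def opSupp [Fintype Λ] [DecidableEq Λ] (A : Op Λ) : Set Λ :=
  {x | ∃ p : Λ → Fin 4, pauliCoeff A p ≠ 0 ∧ p x ≠ 0}

/-- The data of a family of stabilizer checks: each check is a signed Pauli string. -/
structure Checks (Λ E : Type) where
  str : E → Λ → Fin 4
  sgn : E → Bool

variable [Fintype Λ] [DecidableEq Λ] [Fintype E]

/-- The operator of check α. -/
def checkOp (K : Checks Λ E) (α : E) : Op Λ :=
  (if K.sgn α then (-1 : ℂ) else 1) • pauliOp (K.str α)

/-- G_α = (1 + C_α)/2. -/
def Gop (K : Checks Λ E) (α : E) : Op Λ := (2⁻¹ : ℂ) • (1 + checkOp K α)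

/-- E_α = (1 - C_α)/2. -/
def Eop (K : Checks Λ E) (α : E) : Op Λ := (2⁻¹ : ℂ) • (1 - checkOp K α)

/-- The stabilizer Hamiltonian H₀ = Σ_α E_α. -/
def H0 (K : Checks Λ E) : Op Λ := ∑ α, Eop K α

/-- The stabilizer group 𝒢 generated by the checks (as a submonoid; each check squares to 1). -/
def stab (K : Checks Λ E) : Submonoid (Op Λ) :=
  Submonoid.closure (Set.range (checkOp K))

/-- All checks pairwise commute (𝒢 abelian). -/
def CommChecks (K : Checks Λ E) : Prop := ∀ α β, Commute (checkOp K α) (checkOp K β)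

/-- Check support of a qubit. -/
def suppC (K : Checks Λ E) (x : Λ) : Finset E :=
  Finset.univ.filter fun α => x ∈ psupp (K.str α)

/-- The qubit interaction graph. -/
def qubitGraph (K : Checks Λ E) : SimpleGraph Λ :=
  SimpleGraph.fromRel fun x y => ∃ α, x ∈ psupp (K.str α) ∧ y ∈ psupp (K.str α)

/-- The check interaction graph. -/
def checkGraph (K : Checks Λ E) : SimpleGraph E :=
  SimpleGraph.fromRel fun α β => (psupp (K.str α) ∩ psupp (K.str β)).Nonempty

/-- `y` lies in the (closed) ball of radius `r` around `x` in the graph `G`. -/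
def inBall {V : Type} (G : SimpleGraph V) (x y : V) (r : ℝ) : Prop :=
  G.Reachable x y ∧ (G.dist x y : ℝ) ≤ r

/-- Ball in the qubit graph. -/
def ballQ (K : Checks Λ E) (x : Λ) (r : ℝ) : Finset Λ :=
  Finset.univ.filter fun y => inBall (qubitGraph K) x y r

/-- Ball in the check graph. -/
def ballC (K : Checks Λ E) (α : E) (r : ℝ) : Finset E :=
  Finset.univ.filter fun β => inBall (checkGraph K) α β r

/-- Ball of radius `r` around a set of checks. -/
def ballCS (K : Checks Λ E) (S : Finset E) (r : ℝ) : Finset E :=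
  Finset.univ.filter fun β => ∃ α ∈ S, inBall (checkGraph K) α β r

/-- Growth of balls condition: |B_r| ≤ e^{κ r} on both graphs. -/
def BallGrowth (K : Checks Λ E) (κ : ℝ) : Prop :=
  (∀ (x : Λ) (r : ℝ), ((ballQ K x r).card : ℝ) ≤ Real.exp (κ * r)) ∧
  (∀ (α : E) (r : ℝ), ((ballC K α r).card : ℝ) ≤ Real.exp (κ * r))

/-- A finite set is connected in a graph if the induced subgraph is connected. -/
def ConnIn {V : Type} (G : SimpleGraph V) (S : Finset V) : Prop :=
  (G.induce (S : Set V)).Connected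

/-- Qubit support of a set of checks. -/
def suppSet (K : Checks Λ E) (S : Finset E) : Set Λ :=
  ↑(S.biUnion fun α => psupp (K.str α))

variable [LinearOrder E]

/-- Ordered product of operators over a finite set of check labels. -/
def ordProd (S : Finset E) (f : E → Op Λ) : Op Λ :=
  ((S.sort (· ≤ ·)).map f).prod

/-- The codespace projector P = ∏_α G_α (for commuting checks). -/
def Pmat (K : Checks Λ E) : Op Λ := ordProd Finset.univ (Gop K)

/-- The code distance: minimal support of a Pauli string p with P p P not proportional to P. -/
def codeDist (K : Checks Λ E) : ℕ :=
  sInf ((fun p => (psupp p).card) ''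
    {p : Λ → Fin 4 | ¬∃ cc : ℂ, Pmat K * pauliOp p * Pmat K = cc • Pmat K})

/-- TQO-I: Pauli strings of weight below the code distance commuting with 𝒢 belong to 𝒢. -/
def TQO1 (K : Checks Λ E) : Prop :=
  ∀ p : Λ → Fin 4, (psupp p).card < codeDist K →
    (∀ g ∈ stab K, Commute (pauliOp p) g) → pauliOp p ∈ stab K

/-- TQO-II: group elements locally supported on a small connected check set S are generated by
checks within distance ℓ|S| of S. -/
def TQO2 (K : Checks Λ E) (ℓ dtil : ℝ) : Prop :=
  ∀ S : Finset E, ConnIn (checkGraph K) S → (S.card : ℝ) < dtil →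
    ∀ g ∈ stab K, opSupp (g : Op Λ) ⊆ suppSet K S →
      (g : Op Λ) ∈ Submonoid.closure (checkOp K '' {α | ∃ β ∈ S, inBall (checkGraph K) β α (ℓ * S.card)})

/-! ### Words and operator-collections -/

/-- A word: a quadruple of pairwise disjoint subsets of the checks,
labelled (+, -, excited, ground). -/
structure Word (E : Type) where
  p : Finset E
  m : Finset E
  e : Finset E
  g : Finset E
  hpm : Disjoint p m
  hpe : Disjoint p e
  hpg : Disjoint p g
  hme : Disjoint m e
  hmg : Disjoint m g
  heg : Disjoint e g

/-- The underlying set of the word. -/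
def Word.S [DecidableEq E] (w : Word E) : Finset E := w.p ∪ w.m ∪ w.e ∪ w.g

instance : Fintype (Word E) := by
  classical
  exact Fintype.ofInjective (fun w : Word E => (w.p, w.m, w.e, w.g))
    (by
      rintro ⟨a1, a2, a3, a4, _, _, _, _, _, _⟩ ⟨b1, b2, b3, b4, _, _, _, _, _, _⟩ h
      simp only [Prod.mk.injEq] at h
      obtain ⟨h1, h2, h3, h4⟩ := h
      subst h1; subst h2; subst h3; subst h4; rfl)

/-- A word is a ghost if all components except the ground one are empty. -/
def IsGhost (w : Word E) : Prop := w.p = ∅ ∧ w.m = ∅ ∧ w.e = ∅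

/-- The empty word. -/
def emptyWord (E : Type) : Word E :=
  ⟨∅, ∅, ∅, ∅, by simp, by simp, by simp, by simp, by simp, by simp⟩

/-- Left projector assignment of a word. -/
def leftP (K : Checks Λ E) (w : Word E) (α : E) : Op Λ :=
  if α ∈ w.m ∪ w.g then Gop K α else Eop K α

/-- Right projector assignment of a word. -/
def rightP (K : Checks Λ E) (w : Word E) (α : E) : Op Λ :=
  if α ∈ w.p ∪ w.g then Gop K α else Eop K α

/-- The class 𝒳_𝐒 of operators compatible with the word 𝐒. -/
def memClass (K : Checks Λ E) (w : Word E) (X : Op Λ) : Prop :=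
  ∃ Y : Op Λ,
    (∀ α : E, (opSupp Y ∩ (psupp (K.str α) : Set Λ)).Nonempty → α ∈ w.S) ∧
    X = ordProd w.S (leftP K w) * Y * ordProd w.S (rightP K w)

/-- An operator-collection: a family (O_𝐒)_𝐒 with O_𝐒 ∈ 𝒳_𝐒. -/
def IsColl (K : Checks Λ E) (O : Word E → Op Λ) : Prop :=
  ∀ w, memClass K w (O w)

/-- The intensive word norm ‖O‖_μ of an operator-collection. -/
def wordNorm (μ : ℝ) (O : Word E → Op Λ) : ℝ :=
  ⨆ α : E, ∑ w : Word E, (if α ∈ w.S then opNorm (O w) * Real.exp (μ * w.S.card) else 0)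

/-! ### The multiplication table of words -/

/-- Labels of a check in a word: none, ground, excited, raising, lowering. -/
inductive Lbl | N | G | E | P | M
deriving DecidableEq

/-- The multiplication table of labels; `none` encodes that the product vanishes. -/
def lblMul : Lbl → Lbl → Option Lbl
  | .N, x => some x
  | .G, .N => some .G
  | .G, .G => some .G
  | .G, .E => none
  | .G, .P => none
  | .G, .M => some .M
  | .E, .N => some .E
  | .E, .G => none
  | .E, .E => some .E
  | .E, .P => some .P
  | .E, .M => none
  | .P, .N => some .P
  | .P, .G => some .P
  | .P, .E => none
  | .P, .P => none
  | .P, .M => some .E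
  | .M, .N => some .M
  | .M, .G => none
  | .M, .E => some .M
  | .M, .P => some .G
  | .M, .M => none

/-- The label of a check in a word. -/
def Word.lbl [DecidableEq E] (w : Word E) (α : E) : Lbl :=
  if α ∈ w.p then .P else if α ∈ w.m then .M else if α ∈ w.e then .E
  else if α ∈ w.g then .G else .N

/-- The product of two words is defined (the corresponding operator product does not vanish
identically by the multiplication table). -/
def MulDef (w' w : Word E) : Prop :=
  ∀ α : E, lblMul (w'.lbl α) (w.lbl α) ≠ none

private lemma disj_aux {f : E → Option Lbl} {a b : Lbl} (hab : a ≠ b) :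
    Disjoint (Finset.univ.filter fun α => f α = some a)
      (Finset.univ.filter fun α => f α = some b) := by
  rw [Finset.disjoint_left]
  intro x hx hy
  simp only [Finset.mem_filter] at hx hy
  exact hab (Option.some.inj (hx.2.symm.trans hy.2))

/-- The product word 𝐒'𝐒 (meaningful when `MulDef w' w`). -/
def wmul (w' w : Word E) : Word E where
  p := Finset.univ.filter fun α => lblMul (w'.lbl α) (w.lbl α) = some .P
  m := Finset.univ.filter fun α => lblMul (w'.lbl α) (w.lbl α) = some .M
  e := Finset.univ.filter fun α => lblMul (w'.lbl α) (w.lbl α) = some .E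
  g := Finset.univ.filter fun α => lblMul (w'.lbl α) (w.lbl α) = some .G
  hpm := disj_aux (by decide)
  hpe := disj_aux (by decide)
  hpg := disj_aux (by decide)
  hme := disj_aux (by decide)
  hmg := disj_aux (by decide)
  heg := disj_aux (by decide)

/-- The commutator of two operator-collections. -/
def collComm (O O' : Word E → Op Λ) : Word E → Op Λ := fun w =>
  ∑ w1 : Word E, ∑ w2 : Word E,
    if MulDef w1 w2 ∧ wmul w1 w2 = w ∧ (w1.S ∩ w2.S).Nonempty
    then O w1 * O' w2 - O' w1 * O w2 else 0

/-- Iterated adjoint action ad_{B_k}⋯ad_{B_1}(B_0) of operator-collections. -/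
def chainAd (B : ℕ → Word E → Op Λ) : ℕ → Word E → Op Λ
  | 0 => B 0
  | k + 1 => collComm (B (k + 1)) (chainAd B k)

/-- exp(i ad_A)(B) for operator-collections, defined componentwise. -/
def expAd (A B : Word E → Op Λ) : Word E → Op Λ := fun w =>
  ∑' k : ℕ, ((Complex.I ^ k / (k.factorial : ℂ)) • ((fun C => collComm A C)^[k] B) w)

/-! ### Sequences of words -/

/-- The running products 𝐒'_i of a sequence of words. -/
def sprime (σ : ℕ → Word E) : ℕ → Word E
  | 0 => σ 0
  | i + 1 => wmul (σ (i + 1)) (sprime σ i)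

/-- The running products with ghost words skipped. -/
def sprimeG (σ : ℕ → Word E) : ℕ → Word E
  | 0 => σ 0
  | i + 1 => if IsGhost (σ (i + 1)) then sprimeG σ i else wmul (σ (i + 1)) (sprimeG σ i)

/-- Extend a finite sequence of words by the empty word. -/
def extend {k : ℕ} (σ : Fin (k + 1) → Word E) : ℕ → Word E :=
  fun i => if h : i < k + 1 then σ ⟨i, h⟩ else emptyWord E

/-! ### Pauli norms -/

/-- Size of a minimal connected set of qubits containing the support of `p`. -/
def mSize (K : Checks Λ E) (p : Λ → Fin 4) : ℕ :=
  sInf {n | ∃ T : Finset Λ, ConnIn (qubitGraph K) T ∧ psupp p ⊆ T ∧ T.card = n}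

/-- The intensive Pauli norm of an operator given by Pauli coefficients `c`. -/
def pauliNormC (K : Checks Λ E) (μ : ℝ) (c : (Λ → Fin 4) → ℂ) : ℝ :=
  ⨆ x : Λ, ∑ p : Λ → Fin 4, (if p x ≠ 0 then ‖c p‖ * Real.exp (μ * (mSize K p : ℝ)) else 0)

/-- The intensive Pauli norm of an operator. -/
def pauliNormOp (K : Checks Λ E) (μ : ℝ) (A : Op Λ) : ℝ :=
  pauliNormC K μ (pauliCoeff A)

/-- Diameter of the qubit graph. -/
def diam (K : Checks Λ E) : ℕ :=
  Finset.univ.sup fun pr : Λ × Λ => (qubitGraph K).dist pr.1 pr.2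

/-- The spectral projector of a Hermitian matrix onto the eigenvalues in [-δ, δ]. -/
def spectralProjLE {n : Type} [Fintype n] [DecidableEq n] {A : Matrix n n ℂ}
    (hA : A.IsHermitian) (δ : ℝ) : Matrix n n ℂ :=
  (hA.eigenvectorUnitary : Matrix n n ℂ) *
    Matrix.diagonal (fun i => if |hA.eigenvalues i| ≤ δ then (1 : ℂ) else 0) *
    star (hA.eigenvectorUnitary : Matrix n n ℂ)

/-!
For fixed `α`, the `α`-part of `‖[A, C]‖_μ` is bounded by a sum over pairs of overlapping words
`𝐒₁, 𝐒₂` with `α ∈ S₁ ∪ S₂`, because the product word lives on `S₁ ∪ S₂` and `μ ≥ 0`. Summing over the words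
`𝐒₂` that meet `S₁` costs a factor `|S₁|`, which is absorbed by raising the rate from `μ` to `ν`
via `x e^{μx} ≤ e^{νx} / (e (ν - μ))`; hence `‖[A, C]‖_μ ≤ 4 / (e (ν - μ)) ‖A‖_ν ‖C‖_ν`.
In the iteration the outermost commutator takes the share `(μ - μ') / (k + 2)` of the rate loss
and the inner ones the rest; `(1 + 1/(k+1))^(k+1) ≤ e` then keeps the constant at
`(k+2)! (2e)^(k+1)`.
-/

section IteratedCommutator

lemma opNorm_nonneg (A : Op Λ) : 0 ≤ opNorm A := norm_nonneg _

lemma opNorm_sum_le {ι : Type*} (s : Finset ι) (f : ι → Op Λ) :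
    opNorm (∑ i ∈ s, f i) ≤ ∑ i ∈ s, opNorm (f i) := by
  unfold opNorm
  rw [map_sum]
  exact norm_sum_le _ _

lemma opNorm_mul_sub_mul_le (A B C D : Op Λ) :
    opNorm (A * B - C * D) ≤ opNorm A * opNorm B + opNorm C * opNorm D := by
  unfold opNorm
  rw [map_sub, map_mul, map_mul]
  exact (norm_sub_le _ _).trans (add_le_add (norm_mul_le _ _) (norm_mul_le _ _))

lemma Word.mem_S {w : Word E} {α : E} : α ∈ w.S ↔ α ∈ w.p ∨ α ∈ w.m ∨ α ∈ w.e ∨ α ∈ w.g := by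
  simp [Word.S]

lemma Word.lbl_eq_N {w : Word E} {α : E} (h : α ∉ w.S) : w.lbl α = .N := by
  simp only [Word.mem_S, not_or] at h
  simp [Word.lbl, h]

lemma S_wmul_subset (w₁ w₂ : Word E) : (wmul w₁ w₂).S ⊆ w₁.S ∪ w₂.S := by
  intro α hα
  by_contra h
  rw [Finset.mem_union, not_or] at h
  simp only [Word.mem_S, wmul, Finset.mem_filter, Finset.mem_univ, true_and,
    Word.lbl_eq_N h.1, Word.lbl_eq_N h.2] at hα
  exact absurd hα (by decide)

lemma card_S_wmul_le (w₁ w₂ : Word E) : (wmul w₁ w₂).S.card ≤ w₁.S.card + w₂.S.card :=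
  (Finset.card_le_card (S_wmul_subset w₁ w₂)).trans (Finset.card_union_le _ _)

def wordWeight (μ : ℝ) (O : Word E → Op Λ) (w : Word E) : ℝ :=
  opNorm (O w) * Real.exp (μ * w.S.card)

def wordNormAt (μ : ℝ) (O : Word E → Op Λ) (α : E) : ℝ :=
  ∑ w : Word E, if α ∈ w.S then wordWeight μ O w else 0

variable {μ μ' ν : ℝ} (O A C : Word E → Op Λ)

lemma wordWeight_nonneg (w : Word E) : 0 ≤ wordWeight μ O w :=
  mul_nonneg (opNorm_nonneg _) (Real.exp_nonneg _)

lemma wordWeight_mono (h : μ ≤ ν) (w : Word E) : wordWeight μ O w ≤ wordWeight ν O w := by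
  unfold wordWeight
  gcongr
  exact opNorm_nonneg _

lemma wordNormAt_nonneg (α : E) : 0 ≤ wordNormAt μ O α :=
  Finset.sum_nonneg fun w _ => by split_ifs <;> simp [wordWeight_nonneg]

lemma wordNormAt_le_wordNorm (α : E) : wordNormAt μ O α ≤ wordNorm μ O :=
  le_ciSup (Set.finite_range _).bddAbove α

lemma wordNorm_nonneg : 0 ≤ wordNorm μ O :=
  Real.iSup_nonneg (wordNormAt_nonneg O)

lemma wordNorm_mono (h : μ ≤ ν) : wordNorm μ O ≤ wordNorm ν O :=
  Real.iSup_le (fun α => (Finset.sum_le_sum fun w _ => by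
      split_ifs
      exacts [wordWeight_mono O h w, le_rfl]).trans (wordNormAt_le_wordNorm O α))
    (wordNorm_nonneg O)

lemma sum_wordWeight_inter_nonempty_le (T : Finset E) :
    ∑ w : Word E, (if (T ∩ w.S).Nonempty then wordWeight μ O w else 0) ≤ T.card * wordNorm μ O :=
  calc ∑ w : Word E, (if (T ∩ w.S).Nonempty then wordWeight μ O w else 0)
      ≤ ∑ w : Word E, ∑ β ∈ T, (if β ∈ w.S then wordWeight μ O w else 0) := by
        refine Finset.sum_le_sum fun w _ => ?_
        split_ifs with h
        · obtain ⟨β, hβ⟩ := h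
          rw [Finset.mem_inter] at hβ
          refine le_of_eq_of_le (if_pos hβ.2).symm (Finset.single_le_sum (f := fun β =>
            if β ∈ w.S then wordWeight μ O w else 0) (fun β _ => ?_) hβ.1)
          split_ifs <;> simp [wordWeight_nonneg]
        · exact Finset.sum_nonneg fun β _ => by split_ifs <;> simp [wordWeight_nonneg]
    _ = ∑ β ∈ T, wordNormAt μ O β := Finset.sum_comm
    _ ≤ ∑ β ∈ T, wordNorm μ O := Finset.sum_le_sum fun β _ => wordNormAt_le_wordNorm O β
    _ = T.card * wordNorm μ O := by rw [Finset.sum_const, nsmul_eq_mul]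

lemma mul_exp_le_exp_div {a b : ℝ} (hab : a < b) (x : ℝ) :
    x * Real.exp (a * x) ≤ Real.exp (b * x) / (Real.exp 1 * (b - a)) := by
  have hba : 0 < b - a := sub_pos.2 hab
  rw [le_div_iff₀ (by positivity)]
  calc x * Real.exp (a * x) * (Real.exp 1 * (b - a))
      = ((b - a) * x - 1 + 1) * Real.exp (a * x + 1) := by rw [Real.exp_add]; ring
    _ ≤ Real.exp ((b - a) * x - 1) * Real.exp (a * x + 1) := by
        gcongr
        exact Real.add_one_le_exp _
    _ = Real.exp (b * x) := by rw [← Real.exp_add]; ring_nf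

lemma sum_card_mul_wordWeight_le (h : μ < ν) (α : E) :
    ∑ w : Word E, (if α ∈ w.S then w.S.card * wordWeight μ O w else 0) ≤
      wordNormAt ν O α / (Real.exp 1 * (ν - μ)) := by
  rw [wordNormAt, Finset.sum_div]
  refine Finset.sum_le_sum fun w _ => ?_
  split_ifs
  · calc (w.S.card : ℝ) * wordWeight μ O w
        = opNorm (O w) * (w.S.card * Real.exp (μ * w.S.card)) := by unfold wordWeight; ring
      _ ≤ opNorm (O w) * (Real.exp (ν * w.S.card) / (Real.exp 1 * (ν - μ))) := by
        gcongr
        · exact opNorm_nonneg _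
        · exact mul_exp_le_exp_div h _
      _ = wordWeight ν O w / (Real.exp 1 * (ν - μ)) := by unfold wordWeight; ring
  · simp

lemma wordNorm_le_div_sub (h : μ' < μ) : wordNorm μ' O ≤ wordNorm μ O / (μ - μ') := by
  have hδ : 0 < μ - μ' := sub_pos.2 h
  refine Real.iSup_le (fun α => ?_) (div_nonneg (wordNorm_nonneg O) hδ.le)
  calc wordNormAt μ' O α
      ≤ ∑ w : Word E, (if α ∈ w.S then w.S.card * wordWeight μ' O w else 0) := by
        refine Finset.sum_le_sum fun w _ => ?_
        split_ifs with hα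
        · have : (1 : ℝ) ≤ w.S.card := by exact_mod_cast Finset.card_pos.2 ⟨α, hα⟩
          exact le_mul_of_one_le_left (wordWeight_nonneg O w) this
        · rfl
    _ ≤ wordNormAt μ O α / (Real.exp 1 * (μ - μ')) := sum_card_mul_wordWeight_le O h α
    _ ≤ wordNorm μ O / (μ - μ') := by
        refine div_le_div₀ (wordNorm_nonneg O) (wordNormAt_le_wordNorm O α) hδ ?_
        exact le_mul_of_one_le_left hδ.le (Real.one_le_exp zero_le_one)

lemma exp_mul_card_S_wmul_le (hμ : 0 ≤ μ) (w₁ w₂ : Word E) :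
    Real.exp (μ * (wmul w₁ w₂).S.card) ≤ Real.exp (μ * w₁.S.card) * Real.exp (μ * w₂.S.card) := by
  rw [← Real.exp_add, ← mul_add]
  gcongr
  exact_mod_cast card_S_wmul_le w₁ w₂

lemma opNorm_collComm_le (w : Word E) :
    opNorm (collComm A C w) ≤ ∑ w₁ : Word E, ∑ w₂ : Word E,
      if wmul w₁ w₂ = w ∧ (w₁.S ∩ w₂.S).Nonempty then
        opNorm (A w₁) * opNorm (C w₂) + opNorm (C w₁) * opNorm (A w₂) else 0 := by
  refine (opNorm_sum_le _ _).trans (Finset.sum_le_sum fun w₁ _ =>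
    (opNorm_sum_le _ _).trans (Finset.sum_le_sum fun w₂ _ => ?_))
  split_ifs with h h'
  · exact opNorm_mul_sub_mul_le _ _ _ _
  · exact absurd h.2 h'
  all_goals simp only [opNorm, map_zero, norm_zero]; positivity

lemma sum_sum_ite_or_le_two_mul {ι : Type*} [Fintype ι] (P : ι → Prop) [DecidablePred P]
    (R : ι → ι → Prop) [DecidableRel R] (hR : ∀ i j, R i j ↔ R j i) (ψ : ι → ι → ℝ)
    (hψ : ∀ i j, ψ i j = ψ j i) (hψ₀ : ∀ i j, 0 ≤ ψ i j) :
    ∑ i, ∑ j, (if (P i ∨ P j) ∧ R i j then ψ i j else 0) ≤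
      2 * ∑ i, ∑ j, if P i ∧ R i j then ψ i j else 0 :=
  calc ∑ i, ∑ j, (if (P i ∨ P j) ∧ R i j then ψ i j else 0)
      ≤ ∑ i, ∑ j, ((if P i ∧ R i j then ψ i j else 0) + if P j ∧ R i j then ψ i j else 0) := by
        gcongr with i _ j _
        have := hψ₀ i j
        split_ifs <;> first | linarith | tauto
    _ = ∑ i, ∑ j, (if P i ∧ R i j then ψ i j else 0) +
          ∑ i, ∑ j, if P j ∧ R i j then ψ i j else 0 := by
        simp only [Finset.sum_add_distrib]
    _ = 2 * ∑ i, ∑ j, if P i ∧ R i j then ψ i j else 0 := by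
        rw [two_mul, Finset.sum_comm (f := fun i j => if P j ∧ R i j then ψ i j else 0)]
        simp only [hR _ _, hψ _ _]

def pairWeight (μ : ℝ) (A C : Word E → Op Λ) (w₁ w₂ : Word E) : ℝ :=
  wordWeight μ A w₁ * wordWeight μ C w₂ + wordWeight μ C w₁ * wordWeight μ A w₂

lemma pairWeight_nonneg (w₁ w₂ : Word E) : 0 ≤ pairWeight μ A C w₁ w₂ :=
  add_nonneg (mul_nonneg (wordWeight_nonneg A w₁) (wordWeight_nonneg C w₂))
    (mul_nonneg (wordWeight_nonneg C w₁) (wordWeight_nonneg A w₂))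

lemma pairWeight_comm (w₁ w₂ : Word E) : pairWeight μ A C w₁ w₂ = pairWeight μ A C w₂ w₁ := by
  unfold pairWeight
  ring

lemma collComm_summand_mul_exp_le (hμ : 0 ≤ μ) {α : E} {w : Word E} (hα : α ∈ w.S)
    (w₁ w₂ : Word E) :
    (if wmul w₁ w₂ = w ∧ (w₁.S ∩ w₂.S).Nonempty then
        opNorm (A w₁) * opNorm (C w₂) + opNorm (C w₁) * opNorm (A w₂) else 0) *
        Real.exp (μ * w.S.card) ≤
      if wmul w₁ w₂ = w then
        (if (α ∈ w₁.S ∨ α ∈ w₂.S) ∧ (w₁.S ∩ w₂.S).Nonempty then pairWeight μ A C w₁ w₂ else 0)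
      else 0 := by
  have hφ : 0 ≤ opNorm (A w₁) * opNorm (C w₂) + opNorm (C w₁) * opNorm (A w₂) :=
    add_nonneg (mul_nonneg (opNorm_nonneg _) (opNorm_nonneg _))
      (mul_nonneg (opNorm_nonneg _) (opNorm_nonneg _))
  split_ifs with h h' h''
  · obtain ⟨rfl, -⟩ := h
    calc (opNorm (A w₁) * opNorm (C w₂) + opNorm (C w₁) * opNorm (A w₂)) *
          Real.exp (μ * (wmul w₁ w₂).S.card)
        ≤ (opNorm (A w₁) * opNorm (C w₂) + opNorm (C w₁) * opNorm (A w₂)) *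
          (Real.exp (μ * w₁.S.card) * Real.exp (μ * w₂.S.card)) :=
          mul_le_mul_of_nonneg_left (exp_mul_card_S_wmul_le hμ w₁ w₂) hφ
      _ = pairWeight μ A C w₁ w₂ := by unfold pairWeight wordWeight; ring
  · subst h'
    exact absurd ⟨Finset.mem_union.1 (S_wmul_subset w₁ w₂ hα), h.2⟩ h''
  · exact absurd h.1 h'
  all_goals simp [pairWeight_nonneg]

lemma wordNormAt_collComm_le (hμ : 0 ≤ μ) (α : E) :
    wordNormAt μ (collComm A C) α ≤ ∑ w₁ : Word E, ∑ w₂ : Word E,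
      if (α ∈ w₁.S ∨ α ∈ w₂.S) ∧ (w₁.S ∩ w₂.S).Nonempty then pairWeight μ A C w₁ w₂ else 0 :=
  calc wordNormAt μ (collComm A C) α
      ≤ ∑ w : Word E, ∑ w₁ : Word E, ∑ w₂ : Word E, if wmul w₁ w₂ = w then
          (if (α ∈ w₁.S ∨ α ∈ w₂.S) ∧ (w₁.S ∩ w₂.S).Nonempty then pairWeight μ A C w₁ w₂ else 0)
          else 0 := by
        refine Finset.sum_le_sum fun w _ => ?_
        split_ifs with hα
        · calc wordWeight μ (collComm A C) w
              ≤ ∑ w₁ : Word E, ∑ w₂ : Word E,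
                  (if wmul w₁ w₂ = w ∧ (w₁.S ∩ w₂.S).Nonempty then
                    opNorm (A w₁) * opNorm (C w₂) + opNorm (C w₁) * opNorm (A w₂) else 0) *
                    Real.exp (μ * w.S.card) := by
                simp only [wordWeight, ← Finset.sum_mul]
                gcongr
                exact opNorm_collComm_le A C w
            _ ≤ _ := by
                gcongr with w₁ _ w₂ _
                exact collComm_summand_mul_exp_le A C hμ hα w₁ w₂
        · refine Finset.sum_nonneg fun w₁ _ => Finset.sum_nonneg fun w₂ _ => ?_
          split_ifs <;> simp [pairWeight_nonneg]
    _ = _ := by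
        rw [Finset.sum_comm]
        refine Finset.sum_congr rfl fun w₁ _ => ?_
        rw [Finset.sum_comm]
        simp only [Finset.sum_ite_eq, Finset.mem_univ, if_true]

lemma sum_overlapping_wordWeight_mul_le (h : μ < ν) (α : E) :
    ∑ w₁ : Word E, ∑ w₂ : Word E,
      (if α ∈ w₁.S ∧ (w₁.S ∩ w₂.S).Nonempty then wordWeight μ A w₁ * wordWeight μ C w₂ else 0)
      ≤ wordNorm ν A * wordNorm μ C / (Real.exp 1 * (ν - μ)) :=
  calc ∑ w₁ : Word E, ∑ w₂ : Word E,
        (if α ∈ w₁.S ∧ (w₁.S ∩ w₂.S).Nonempty then wordWeight μ A w₁ * wordWeight μ C w₂ else 0)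
      ≤ ∑ w₁ : Word E, (if α ∈ w₁.S then w₁.S.card * wordWeight μ A w₁ else 0) * wordNorm μ C := by
        refine Finset.sum_le_sum fun w₁ _ => ?_
        by_cases hα : α ∈ w₁.S
        · simp only [hα, true_and, if_true, ← mul_ite_zero, ← Finset.mul_sum]
          calc wordWeight μ A w₁ * ∑ w₂ : Word E,
                (if (w₁.S ∩ w₂.S).Nonempty then wordWeight μ C w₂ else 0)
              ≤ wordWeight μ A w₁ * (w₁.S.card * wordNorm μ C) :=
                mul_le_mul_of_nonneg_left (sum_wordWeight_inter_nonempty_le C w₁.S)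
                  (wordWeight_nonneg A w₁)
            _ = _ := by ring
        · simp [hα]
    _ = (∑ w₁ : Word E, if α ∈ w₁.S then w₁.S.card * wordWeight μ A w₁ else 0) * wordNorm μ C :=
        (Finset.sum_mul ..).symm
    _ ≤ wordNorm ν A / (Real.exp 1 * (ν - μ)) * wordNorm μ C := by
        gcongr
        · exact wordNorm_nonneg C
        · exact (sum_card_mul_wordWeight_le A h α).trans
            (div_le_div_of_nonneg_right (wordNormAt_le_wordNorm A α) (by positivity))
    _ = _ := by ring

lemma wordNorm_collComm_le (hμ : 0 ≤ μ) (h : μ < ν) :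
    wordNorm μ (collComm A C) ≤ 4 / (Real.exp 1 * (ν - μ)) * (wordNorm ν A * wordNorm ν C) := by
  have hδ : 0 < Real.exp 1 * (ν - μ) := by have := sub_pos.2 h; positivity
  refine Real.iSup_le (fun α => ?_)
    (mul_nonneg (div_nonneg zero_le_four hδ.le) (mul_nonneg (wordNorm_nonneg A) (wordNorm_nonneg C)))
  calc wordNormAt μ (collComm A C) α
      ≤ 2 * ∑ w₁ : Word E, ∑ w₂ : Word E,
          if α ∈ w₁.S ∧ (w₁.S ∩ w₂.S).Nonempty then pairWeight μ A C w₁ w₂ else 0 :=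
        (wordNormAt_collComm_le A C hμ α).trans
          (sum_sum_ite_or_le_two_mul (fun w : Word E => α ∈ w.S)
            (fun w₁ w₂ : Word E => (w₁.S ∩ w₂.S).Nonempty)
            (fun w₁ w₂ => by rw [Finset.inter_comm]) (pairWeight μ A C) (pairWeight_comm A C)
            (pairWeight_nonneg A C))
    _ = 2 * ((∑ w₁ : Word E, ∑ w₂ : Word E,
            if α ∈ w₁.S ∧ (w₁.S ∩ w₂.S).Nonempty then wordWeight μ A w₁ * wordWeight μ C w₂ else 0) +
          ∑ w₁ : Word E, ∑ w₂ : Word E,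
            if α ∈ w₁.S ∧ (w₁.S ∩ w₂.S).Nonempty then wordWeight μ C w₁ * wordWeight μ A w₂ else 0) := by
        simp only [pairWeight, ite_add_zero, Finset.sum_add_distrib]
    _ ≤ 2 * (wordNorm ν A * wordNorm μ C / (Real.exp 1 * (ν - μ)) +
          wordNorm ν C * wordNorm μ A / (Real.exp 1 * (ν - μ))) := by
        gcongr
        exacts [sum_overlapping_wordWeight_mul_le A C h α, sum_overlapping_wordWeight_mul_le C A h α]
    _ ≤ 2 * (wordNorm ν A * wordNorm ν C / (Real.exp 1 * (ν - μ)) +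
          wordNorm ν C * wordNorm ν A / (Real.exp 1 * (ν - μ))) := by
        have hA := mul_le_mul_of_nonneg_left (wordNorm_mono A h.le) (wordNorm_nonneg (μ := ν) C)
        have hC := mul_le_mul_of_nonneg_left (wordNorm_mono C h.le) (wordNorm_nonneg (μ := ν) A)
        gcongr
    _ = _ := by ring

lemma add_two_pow_le_exp_one_mul (k : ℕ) :
    ((k : ℝ) + 2) ^ (k + 1) ≤ Real.exp 1 * ((k : ℝ) + 1) ^ (k + 1) := by
  have hk : (0 : ℝ) < k + 1 := by positivity
  have h := pow_le_pow_left₀ (by positivity) (Real.add_one_le_exp (1 / ((k : ℝ) + 1))) (k + 1)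
  rw [← Real.exp_nat_mul, show ((k + 1 : ℕ) : ℝ) * (1 / ((k : ℝ) + 1)) = 1 by
    push_cast; field_simp] at h
  calc ((k : ℝ) + 2) ^ (k + 1) = ((1 / ((k : ℝ) + 1) + 1) * ((k : ℝ) + 1)) ^ (k + 1) := by
        congr 1; field_simp; ring
    _ = (1 / ((k : ℝ) + 1) + 1) ^ (k + 1) * ((k : ℝ) + 1) ^ (k + 1) := mul_pow _ _ _
    _ ≤ Real.exp 1 * ((k : ℝ) + 1) ^ (k + 1) := by gcongr

lemma iterated_commutator_constant_step (k : ℕ) {δ : ℝ} (hδ : 0 < δ) :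
    4 / (Real.exp 1 * (δ / (k + 2))) *
        (((k + 1).factorial : ℝ) * (2 * Real.exp 1) ^ k / (δ * (k + 1) / (k + 2)) ^ (k + 1)) ≤
      ((k + 2).factorial : ℝ) * (2 * Real.exp 1) ^ (k + 1) / δ ^ (k + 2) := by
  have he : 2 ≤ Real.exp 1 := by linarith [Real.add_one_le_exp 1]
  have hc : 0 ≤ ((k + 2).factorial : ℝ) * (2 * Real.exp 1) ^ k / δ ^ (k + 2) :=
    div_nonneg (by positivity) (pow_nonneg hδ.le _)
  have hL : 4 / (Real.exp 1 * (δ / (k + 2))) *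
        (((k + 1).factorial : ℝ) * (2 * Real.exp 1) ^ k / (δ * (k + 1) / (k + 2)) ^ (k + 1)) =
      ((k + 2).factorial : ℝ) * (2 * Real.exp 1) ^ k / δ ^ (k + 2) *
        (4 * ((k : ℝ) + 2) ^ (k + 1) / (Real.exp 1 * ((k : ℝ) + 1) ^ (k + 1))) := by
    rw [Nat.factorial_succ (k + 1), div_pow, mul_pow δ]
    push_cast
    field_simp
    ring
  have hR : ((k + 2).factorial : ℝ) * (2 * Real.exp 1) ^ (k + 1) / δ ^ (k + 2) =
      ((k + 2).factorial : ℝ) * (2 * Real.exp 1) ^ k / δ ^ (k + 2) * (2 * Real.exp 1) := by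
    ring
  rw [hL, hR]
  refine mul_le_mul_of_nonneg_left ?_ hc
  rw [div_le_iff₀ (by positivity)]
  have := add_two_pow_le_exp_one_mul k
  have : (0 : ℝ) ≤ ((k : ℝ) + 1) ^ (k + 1) := by positivity
  nlinarith [mul_nonneg (mul_nonneg (sub_nonneg.2 he) (Real.exp_pos 1).le) this]

lemma wordNorm_collComm_le_of_forall_lt {k : ℕ} {b : ℝ} (hb : 0 ≤ b) (hμ' : 0 ≤ μ') (hμ : μ' < μ)
    (hC : ∀ ν, μ' < ν → ν < μ →
      wordNorm ν C ≤ ((k + 1).factorial : ℝ) * (2 * Real.exp 1) ^ k / (μ - ν) ^ (k + 1) * b) :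
    wordNorm μ' (collComm A C) ≤
      ((k + 2).factorial : ℝ) * (2 * Real.exp 1) ^ (k + 1) / (μ - μ') ^ (k + 2) *
        (b * wordNorm μ A) := by
  have hδ : 0 < μ - μ' := sub_pos.2 hμ
  set ν := μ' + (μ - μ') / (k + 2)
  have hνμ' : ν - μ' = (μ - μ') / (k + 2) := by ring
  have hμν : μ - ν = (μ - μ') * (k + 1) / (k + 2) := by simp only [ν]; field_simp; ring
  have hν : μ' < ν := by linarith [show 0 < (μ - μ') / (k + 2) by positivity]
  have hνμ : ν < μ := by linarith [show 0 < (μ - μ') * (k + 1) / (k + 2) by positivity]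
  calc wordNorm μ' (collComm A C)
      ≤ 4 / (Real.exp 1 * (ν - μ')) * (wordNorm ν A * wordNorm ν C) :=
        wordNorm_collComm_le A C hμ' hν
    _ ≤ 4 / (Real.exp 1 * (ν - μ')) * (wordNorm μ A *
          (((k + 1).factorial : ℝ) * (2 * Real.exp 1) ^ k / (μ - ν) ^ (k + 1) * b)) :=
        mul_le_mul_of_nonneg_left
          (mul_le_mul (wordNorm_mono A hνμ.le) (hC ν hν hνμ) (wordNorm_nonneg C)
            (wordNorm_nonneg A))
          (div_nonneg zero_le_four (mul_nonneg (Real.exp_pos 1).le (sub_nonneg.2 hν.le)))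
    _ = 4 / (Real.exp 1 * (ν - μ')) *
          (((k + 1).factorial : ℝ) * (2 * Real.exp 1) ^ k / (μ - ν) ^ (k + 1)) *
          (b * wordNorm μ A) := by ring
    _ ≤ _ := by
        rw [hνμ', hμν]
        exact mul_le_mul_of_nonneg_right (iterated_commutator_constant_step k hδ)
          (mul_nonneg hb (wordNorm_nonneg A))

end IteratedCommutator

theorem iterated_commutator_bound_general {Λ E : Type} [Fintype Λ] [DecidableEq Λ] [Fintype E]
    [LinearOrder E] (B : ℕ → Word E → Op Λ) (k : ℕ)
    (μ' μ : ℝ) (hμ0 : 0 ≤ μ') (hμ : μ' < μ) :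
    wordNorm μ' (chainAd B k) ≤
      ((k + 1).factorial : ℝ) * (2 * Real.exp 1) ^ k / (μ - μ') ^ (k + 1) *
        ∏ t ∈ Finset.range (k + 1), wordNorm μ (B t) := by
  induction k generalizing μ' μ with
  | zero => simpa [chainAd, div_eq_inv_mul] using wordNorm_le_div_sub (B 0) hμ
  | succ k ih =>
    rw [chainAd, Finset.prod_range_succ]
    exact wordNorm_collComm_le_of_forall_lt _ _
      (Finset.prod_nonneg fun t _ => wordNorm_nonneg (B t)) hμ0 hμ
      fun ν hν hνμ => ih ν μ (hμ0.trans hν.le) hνμ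

/-- **Norm bound for iterated commutators of operator-collections.**
For operator-collections `B⁰, …, Bᵏ` and `0 ≤ μ' < μ`,
`‖ad_{Bᵏ}⋯ad_{B¹}(B⁰)‖_{μ'} ≤ (k+1)!(2e)^k/(μ−μ')^{k+1} ∏_t ‖Bᵗ‖_μ`. -/
theorem iterated_commutator_bound {Λ E : Type} [Fintype Λ] [DecidableEq Λ] [Fintype E]
    [LinearOrder E] (K : Checks Λ E) (B : ℕ → Word E → Op Λ) (k : ℕ)
    (hB : ∀ t ≤ k, IsColl K (B t))
    (μ' μ : ℝ) (hμ0 : 0 ≤ μ') (hμ : μ' < μ) :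
    wordNorm μ' (chainAd B k) ≤
      ((k + 1).factorial : ℝ) * (2 * Real.exp 1) ^ k / (μ - μ') ^ (k + 1) *
        ∏ t ∈ Finset.range (k + 1), wordNorm μ (B t) :=
  iterated_commutator_bound_general B k μ' μ hμ0 hμ

end QLDPC
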